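/- arXiv:2008.01528 — 2 statements merged into one kernel-verified Lean document; each statement's English description precedes it below -/
import Mathlib

section
/- Subset extraction lemma for limsup of sums (Lemma 4 of the paper): Let q_i : ℕ → ℝ≥0 for i ∈ {1,...,N} be nonnegative sequences with q_i(T) ≤ A_max·(T+1), and set s = limsup_{T→∞} Σ_i q_i(T)/T. If s > 0, then there exists a nonempty subset I* ⊆ {1,...,N} and a strictly increasing sequence of indices T_k such that: (a) lim_k Σ_{i∈I*} q_i(T_k)/T_k = s; (b) liminf_k q_i(T_k)/T_k > 0 for every i ∈ I*; and (c) limsup_k q_i(T_k)/T_k = 0 for every i ∉ I*. -/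
open Filter Topology

/-!
Pass first to a subsequence along which the normalized sum converges to its limsup `s`,
then, by compactness of a box in `ℝᴺ`, to a further subsequence along which every
normalized coordinate `q i T / T` converges, say to `a i ≥ 0`. The limits sum to `s > 0`,
and the dominant subset is the set of coordinates with `a i > 0`.
-/

lemma div_natCast_le_two_mul {x A : ℝ} {T : ℕ} (hx : 0 ≤ x) (h : x ≤ A * (T + 1)) :
    x / T ≤ 2 * A := by
  have hA : 0 ≤ A := nonneg_of_mul_nonneg_left (hx.trans h) (by positivity)
  rcases Nat.eq_zero_or_pos T with rfl | hT
  · simpa using hA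
  · have hT1 : (1 : ℝ) ≤ T := by exact_mod_cast hT
    rw [div_le_iff₀ (by positivity)]
    nlinarith

lemma exists_strictMono_tendsto_limsup {α : Type*} [ConditionallyCompleteLinearOrder α]
    [TopologicalSpace α] [OrderTopology α] [FirstCountableTopology α] {u : ℕ → α}
    (hc : IsCoboundedUnder (· ≤ ·) atTop u) (hb : IsBoundedUnder (· ≤ ·) atTop u) :
    ∃ φ : ℕ → ℕ, StrictMono φ ∧ Tendsto (u ∘ φ) atTop (𝓝 (limsup u atTop)) := by
  obtain ⟨x, hux, hx⟩ := exists_seq_tendsto_limsup hc hb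
  obtain ⟨ψ, hψ, hxψ⟩ := strictMono_subseq_of_tendsto_atTop hx
  exact ⟨x ∘ ψ, hxψ, hux.comp hψ.tendsto_atTop⟩

lemma exists_dominant_finset_of_tendsto {ι : Type*} [Fintype ι] {u : ι → ℕ → ℝ}
    {a : ι → ℝ} (hu : ∀ i, Tendsto (u i) atTop (𝓝 (a i))) (ha : ∀ i, 0 ≤ a i)
    (hpos : 0 < ∑ i, a i) :
    ∃ I : Finset ι, I.Nonempty ∧
      Tendsto (fun k => ∑ i ∈ I, u i k) atTop (𝓝 (∑ i, a i)) ∧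
      (∀ i ∈ I, 0 < liminf (u i) atTop) ∧ ∀ i ∉ I, limsup (u i) atTop = 0 := by
  classical
  refine ⟨({i | 0 < a i} : Finset ι), ?_, ?_, fun i hi => ?_, fun i hi => ?_⟩
  · obtain ⟨i, -, hi⟩ := Finset.exists_lt_of_sum_lt (f := fun _ => (0 : ℝ))
      (by simpa using hpos)
    exact ⟨i, by simpa using hi⟩
  · rw [← Finset.sum_filter_of_ne fun i _ hi => (ha i).lt_of_ne' hi]
    exact tendsto_finsetSum _ fun i _ => hu i
  · rw [(hu i).liminf_eq]
    simpa using hi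
  · rw [(hu i).limsup_eq]
    exact le_antisymm (by simpa using hi) (ha i)

theorem stmt_11_general (N : ℕ) (Amax : ℝ)
    (q : Fin N → ℕ → ℝ)
    (hq0 : ∀ i T, 0 ≤ q i T)
    (hqb : ∀ i T, q i T ≤ Amax * (T + 1))
    (s : ℝ) (hs : limsup (fun T : ℕ => ∑ i, q i T / T) atTop = s) (hspos : 0 < s) :
    ∃ I : Finset (Fin N), I.Nonempty ∧ ∃ Tk : ℕ → ℕ, StrictMono Tk ∧
      Tendsto (fun k => ∑ i ∈ I, q i (Tk k) / (Tk k)) atTop (nhds s) ∧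
      (∀ i ∈ I, 0 < liminf (fun k => q i (Tk k) / (Tk k)) atTop) ∧
      (∀ i ∉ I, limsup (fun k => q i (Tk k) / (Tk k)) atTop = 0) := by
  set x : ℕ → Fin N → ℝ := fun T i => q i T / T
  have hx (T : ℕ) : x T ∈ Set.Icc 0 (fun _ => 2 * Amax) :=
    ⟨fun i => div_nonneg (hq0 i T) T.cast_nonneg,
      fun i => div_natCast_le_two_mul (hq0 i T) (hqb i T)⟩
  obtain ⟨φ, hφ, hsum⟩ := exists_strictMono_tendsto_limsup (u := fun T => ∑ i, x T i)
    (isBoundedUnder_of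
      ⟨0, fun T => Finset.sum_nonneg fun i _ => (hx T).1 i⟩).isCoboundedUnder_le
    (isBoundedUnder_of ⟨_, fun T => Finset.sum_le_sum fun i _ => (hx T).2 i⟩)
  obtain ⟨a, ha, ψ, hψ, hxa⟩ := isCompact_Icc.tendsto_subseq fun n => hx (φ n)
  have hcoord (i : Fin N) : Tendsto (fun k => x (φ (ψ k)) i) atTop (𝓝 (a i)) :=
    tendsto_pi_nhds.mp hxa i
  have hsa : ∑ i, a i = s := tendsto_nhds_unique (tendsto_finsetSum _ fun i _ => hcoord i)
    (hs ▸ hsum.comp hψ.tendsto_atTop)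
  obtain ⟨I, hI, hItend, hIpos, hIzero⟩ :=
    exists_dominant_finset_of_tendsto hcoord (fun i => ha.1 i) (hsa ▸ hspos)
  exact ⟨I, hI, φ ∘ ψ, hφ.comp hψ, hsa ▸ hItend, hIpos, hIzero⟩

/-- Subset extraction lemma: if the limsup of the normalized sum of N bounded
nonnegative sequences is s > 0, one can find a nonempty dominant subset I* of
coordinates and a strictly increasing subsequence T_k along which the I*-sum
converges to s, every coordinate in I* has positive liminf, and every
coordinate outside I* has limsup zero. -/
theorem stmt_11 (N : ℕ) (hN : 0 < N) (Amax : ℝ) (hAmax : 0 < Amax)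
    (q : Fin N → ℕ → ℝ)
    (hq0 : ∀ i T, 0 ≤ q i T)
    (hqb : ∀ i T, q i T ≤ Amax * (T + 1))
    (s : ℝ) (hs : limsup (fun T : ℕ => ∑ i, q i T / T) atTop = s) (hspos : 0 < s) :
    ∃ I : Finset (Fin N), I.Nonempty ∧ ∃ Tk : ℕ → ℕ, StrictMono Tk ∧
      Tendsto (fun k => ∑ i ∈ I, q i (Tk k) / (Tk k)) atTop (nhds s) ∧
      (∀ i ∈ I, 0 < liminf (fun k => q i (Tk k) / (Tk k)) atTop) ∧
      (∀ i ∉ I, limsup (fun k => q i (Tk k) / (Tk k)) atTop = 0) :=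
  stmt_11_general N Amax q hq0 hqb s hs hspos
end

section
/- The uncooperative user assignment problem is NP-hard: the set-covering decision problem reduces in polynomial time to it. Specifically, given a universe E and a family S of subsets covering E and an integer k, construct an assignment instance with one adaptive user per element (arrival rate 1/|E|), one channel per subset (user i can transmit on channel j iff element i belongs to subset j), |S| − k uncooperative users of rate 1 and k of rate 0, any user assignable to any channel; then a stabilizing assignment satisfying the sufficient conditions exists iff E can be covered by at most k subsets of S. -/
/-- Correctness of the reduction from set covering: in the constructed
assignment instance (one adaptive user per element of the universe α with
rate 1/|α|, one channel per subset, k rate-0 uncooperative users and the rest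
rate-1), an assignment of uncooperative users to channels (i.e., a choice C of
k channels receiving the rate-0 users, giving capacity 1, other channels
capacity 0) admitting feasible flow variables ρ exists if and only if the
universe can be covered by at most k of the subsets. -/
theorem stmt_17 {σ α : Type*} [Fintype σ] [Fintype α] [Nonempty α] [DecidableEq σ]
    (s : σ → Finset α) (hcover : ∀ e : α, ∃ j, e ∈ s j)
    (k : ℕ) (hk : k ≤ Fintype.card σ) :
    (∃ C : Finset σ, C.card = k ∧
      ∃ ρ : α → σ → ℝ,
        (∀ i j, 0 ≤ ρ i j ∧ ρ i j ≤ 1) ∧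
        (∀ i j, ρ i j ≠ 0 → i ∈ s j) ∧
        (∀ i : α, (1 : ℝ) / (Fintype.card α) ≤ ∑ j, ρ i j) ∧
        (∀ j : σ, (∑ i, ρ i j) ≤ if j ∈ C then 1 else 0)) ↔
    (∃ C : Finset σ, C.card ≤ k ∧ ∀ e : α, ∃ j ∈ C, e ∈ s j) := by
  have hcardpos : (0 : ℝ) < Fintype.card α := by
    exact_mod_cast Fintype.card_pos
  constructor
  · rintro ⟨C, hCk, ρ, hbd, hmem, hrow, hcol⟩
    refine ⟨C, hCk.le, fun e => ?_⟩
    have hsum : (0 : ℝ) < ∑ j, ρ e j := lt_of_lt_of_le (by positivity) (hrow e)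
    obtain ⟨j, -, hj⟩ := Finset.exists_lt_of_sum_lt (f := fun _ : σ => (0:ℝ))
      (by simpa using hsum)
    have hjC : j ∈ C := by
      by_contra hjc
      have h1 : ∑ i, ρ i j ≤ 0 := by simpa [hjc] using hcol j
      have h2 : ρ e j ≤ ∑ i, ρ i j :=
        Finset.single_le_sum (fun i _ => (hbd i j).1) (Finset.mem_univ e)
      linarith
    exact ⟨j, hjC, hmem e j hj.ne'⟩
  · rintro ⟨C, hCk, hcov⟩
    obtain ⟨C', hCC', hC'⟩ := Finset.exists_superset_card_eq hCk (by simpa using hk)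
    choose f hfC hfs using hcov
    refine ⟨C', hC', fun i j => if j = f i then 1 / Fintype.card α else 0,
      ?_, ?_, ?_, ?_⟩
    · intro i j
      dsimp only
      constructor
      · positivity
      · split
        · rw [div_le_one hcardpos]; exact_mod_cast Fintype.card_pos
        · norm_num
    · intro i j h
      by_cases hj : j = f i
      · subst hj; exact hfs i
      · simp [hj] at h
    · intro i; simp
    · intro j
      by_cases hj : j ∈ C'
      · simp only [hj, if_true]
        calc ∑ i : α, (if j = f i then 1 / (Fintype.card α : ℝ) else 0)
            ≤ ∑ i : α, 1 / (Fintype.card α : ℝ) := by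
              apply Finset.sum_le_sum
              intro i _
              split
              · exact le_rfl
              · positivity
          _ = 1 := by
              rw [Finset.sum_const, Finset.card_univ, nsmul_eq_mul]
              field_simp
      · have : ∀ i : α, j ≠ f i := fun i h => hj (hCC' (h ▸ hfC i))
        simp [hj, this]
end
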